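/- Let h: ℝⁿ → ℝ be a piecewise-affine function with finitely many affine pieces each having integer linear part, and suppose h is affine on each cell of a complete rational polyhedral fan. Then there exists a convex function g, given as a finite maximum of integer-affine functions, such that h + g is convex; hence h is the difference of two tropical polynomial functions. -/

import Mathlib

/-!
Take `g = ∑_{j,k} max (A_j, A_k)`, the sum over all pairs of affine pieces `A_j` of `h`.
Convexity of `h + g` can be checked on lines. Near a point of a line, `h` follows one piece
`A_j` on the left and one piece `A_k` on the right, so locally it is `max (A_j, A_k)` or
`min (A_j, A_k)`; in both cases `h + max (A_j, A_k)` is locally convex, because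
`min + max = A_j + A_k`. A continuous, locally convex function of one variable is convex.

Now `g` and `h + g` are convex and piecewise affine with integer slopes. Such a function `F` is
the maximum of its pieces on the cells whose closure has nonempty interior. Each of those
pieces agrees with `F` on an open set, so it lies below `F` by convexity, and by Baire these
cells are dense.
-/

/-- A tropical polynomial function on `ℝⁿ`: a finite maximum of functions
`x ↦ a + ⟨α, x⟩` with `a ∈ ℝ` and `α ∈ ℤⁿ`. -/
def IsTropPoly {n : ℕ} (f : (Fin n → ℝ) → ℝ) : Prop :=
  ∃ (Δ : Finset (Fin n → ℤ)) (hΔ : Δ.Nonempty) (a : (Fin n → ℤ) → ℝ),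
    ∀ x : Fin n → ℝ, f x = Δ.sup' hΔ (fun α => a α + ∑ i, (α i : ℝ) * x i)

open Set Filter Topology

section Affine

variable {E : Type*} [AddCommGroup E] [Module ℝ E]

theorem AffineMap.convexOn_univ (f : E →ᵃ[ℝ] ℝ) : ConvexOn ℝ univ f :=
  (convexOn_id convex_univ).comp_affineMap f

theorem AffineMap.concaveOn_univ (f : E →ᵃ[ℝ] ℝ) : ConcaveOn ℝ univ f :=
  (concaveOn_id convex_univ).comp_affineMap f

theorem convexOn_finset_sum {κ : Type*} {s : Set E} (hs : Convex ℝ s) {t : Finset κ}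
    {f : κ → E → ℝ} (hf : ∀ i ∈ t, ConvexOn ℝ s (f i)) : ConvexOn ℝ s (∑ i ∈ t, f i) :=
  Finset.sum_induction f (ConvexOn ℝ s) (fun _ _ => ConvexOn.add) (convexOn_const 0 hs) hf

end Affine

def intAffine {n : ℕ} (c : ℝ) (α : Fin n → ℤ) : (Fin n → ℝ) →ᵃ[ℝ] ℝ where
  toFun x := c + ∑ i, (α i : ℝ) * x i
  linear := ∑ i, (α i : ℝ) • LinearMap.proj i
  map_vadd' x v := by
    simp [Finset.sum_add_distrib, mul_add]
    ring

@[simp]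
theorem intAffine_apply {n : ℕ} (c : ℝ) (α : Fin n → ℤ) (x : Fin n → ℝ) :
    intAffine c α x = c + ∑ i, (α i : ℝ) * x i := rfl

theorem intAffine_add {n : ℕ} (c d : ℝ) (α β : Fin n → ℤ) :
    intAffine (c + d) (α + β) = intAffine c α + intAffine d β := by
  ext x
  simp [add_mul, Finset.sum_add_distrib]
  ring

theorem isTropPoly_of_eq_sup' {n : ℕ} {κ : Type*} {f : (Fin n → ℝ) → ℝ} (s : Finset κ)
    (hs : s.Nonempty) (c : κ → ℝ) (α : κ → Fin n → ℤ)
    (hf : ∀ x, f x = s.sup' hs fun j => intAffine (c j) (α j) x) : IsTropPoly f := by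
  classical
  let fiber (β : Fin n → ℤ) := s.filter (α · = β)
  refine ⟨s.image α, hs.image α,
    fun β => if h : (fiber β).Nonempty then (fiber β).sup' h c else 0, fun x => ?_⟩
  rw [hf x]
  apply le_antisymm
  · refine Finset.sup'_le _ _ fun j hj => ?_
    have hj' : j ∈ fiber (α j) := Finset.mem_filter.2 ⟨hj, rfl⟩
    have hne : (fiber (α j)).Nonempty := ⟨j, hj'⟩
    refine le_trans ?_ (Finset.le_sup' _ (Finset.mem_image_of_mem α hj))
    simp only [dif_pos hne, intAffine_apply]
    gcongr
    exact Finset.le_sup' c hj'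
  · refine Finset.sup'_le _ _ fun β hβ => ?_
    obtain ⟨j, hj, rfl⟩ := Finset.mem_image.1 hβ
    have hne : (fiber (α j)).Nonempty := ⟨j, Finset.mem_filter.2 ⟨hj, rfl⟩⟩
    obtain ⟨k, hk, hck⟩ := Finset.exists_mem_eq_sup' hne c
    obtain ⟨hks, hkα⟩ := Finset.mem_filter.1 hk
    simp only [dif_pos hne, hck]
    rw [← hkα]
    exact Finset.le_sup' (fun j => intAffine (c j) (α j) x) hks

structure IsPiecewiseAffine {E ι : Type*} [AddCommGroup E] [Module ℝ E] (f : E → ℝ)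
    (C : ι → Set E) (A : ι → E →ᵃ[ℝ] ℝ) : Prop where
  iUnion_eq : ⋃ i, C i = univ
  convex : ∀ i, Convex ℝ (C i)
  eqOn : ∀ i, EqOn f (A i) (C i)

namespace IsPiecewiseAffine

variable {E F ι κ : Type*} [AddCommGroup E] [Module ℝ E] [AddCommGroup F] [Module ℝ F]
  {f g : E → ℝ} {C : ι → Set E} {D : κ → Set E} {A : ι → E →ᵃ[ℝ] ℝ} {B : κ → E →ᵃ[ℝ] ℝ}

theorem comp_affineMap (hf : IsPiecewiseAffine f C A) (γ : F →ᵃ[ℝ] E) :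
    IsPiecewiseAffine (f ∘ γ) (fun i => γ ⁻¹' C i) (fun i => (A i).comp γ) where
  iUnion_eq := by rw [← preimage_iUnion, hf.iUnion_eq, preimage_univ]
  convex i := (hf.convex i).affine_preimage γ
  eqOn i _ hx := hf.eqOn i hx

theorem add (hf : IsPiecewiseAffine f C A) (hg : IsPiecewiseAffine g D B) :
    IsPiecewiseAffine (f + g) (fun k : ι × κ => C k.1 ∩ D k.2) (fun k => A k.1 + B k.2) where
  iUnion_eq := by
    refine eq_univ_of_forall fun x => ?_
    obtain ⟨i, hi⟩ := mem_iUnion.1 (hf.iUnion_eq ▸ mem_univ x)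
    obtain ⟨j, hj⟩ := mem_iUnion.1 (hg.iUnion_eq ▸ mem_univ x)
    exact mem_iUnion.2 ⟨(i, j), hi, hj⟩
  convex k := (hf.convex k.1).inter (hg.convex k.2)
  eqOn k x hx := by simp [hf.eqOn k.1 hx.1, hg.eqOn k.2 hx.2]

end IsPiecewiseAffine

theorem isPiecewiseAffine_sup {E : Type*} [AddCommGroup E] [Module ℝ E] (A B : E →ᵃ[ℝ] ℝ) :
    IsPiecewiseAffine (⇑A ⊔ ⇑B) ![{x | B x ≤ A x}, {x | A x ≤ B x}] ![A, B] where
  iUnion_eq := eq_univ_of_forall fun x => by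
    rcases le_total (B x) (A x) with h | h
    · exact mem_iUnion.2 ⟨0, h⟩
    · exact mem_iUnion.2 ⟨1, h⟩
  convex := by
    simp only [Fin.forall_fin_two]
    constructor
    · simpa [sub_nonpos] using (B - A).convexOn_univ.convex_le 0
    · simpa [sub_nonpos] using (A - B).convexOn_univ.convex_le 0
  eqOn := by
    simp only [Fin.forall_fin_two]
    exact ⟨fun x hx => sup_of_le_left hx, fun x hx => sup_of_le_right hx⟩

section Normed

variable {E : Type*} [NormedAddCommGroup E] [NormedSpace ℝ E]

theorem ConvexOn.affine_le_of_eventuallyEq {f : E → ℝ} (hf : ConvexOn ℝ univ f)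
    {A : E →ᵃ[ℝ] ℝ} {z : E} (hz : f =ᶠ[𝓝 z] A) (y : E) : A y ≤ f y := by
  have hmin : IsLocalMin (f - ⇑A) z := hz.mono fun x hx => by simp [hx, hz.eq_of_nhds]
  simpa [hz.eq_of_nhds] using IsMinOn.of_isLocalMin_of_convex_univ hmin
    (hf.sub A.concaveOn_univ) y

theorem IsPiecewiseAffine.exists_eq_sup' [FiniteDimensional ℝ E] {ι : Type*} [Finite ι]
    {f : E → ℝ} {C : ι → Set E} {A : ι → E →ᵃ[ℝ] ℝ} (hf : IsPiecewiseAffine f C A)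
    (hconv : ConvexOn ℝ univ f) :
    ∃ (s : Finset ι) (hs : s.Nonempty), ∀ x, f x = s.sup' hs fun i => A i x := by
  classical
  have := Fintype.ofFinite ι
  have hcont : Continuous f := continuousOn_univ.1 (hconv.continuousOn isOpen_univ)
  have hclosure (i : ι) : EqOn f (A i) (closure (C i)) :=
    (hf.eqOn i).closure hcont (A i).continuous_of_finiteDimensional
  have hdense : Dense (⋃ i, interior (closure (C i))) :=
    dense_iUnion_interior_of_closed (fun _ => isClosed_closure)
      (eq_univ_of_subset (iUnion_mono fun i => subset_closure) hf.iUnion_eq)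
  set s := Finset.univ.filter fun i => (interior (closure (C i))).Nonempty
  have hmem (i : ι) (x : E) (hx : x ∈ interior (closure (C i))) : i ∈ s :=
    Finset.mem_filter.2 ⟨Finset.mem_univ _, x, hx⟩
  obtain ⟨x₀, hx₀⟩ := hdense.nonempty
  obtain ⟨i₀, hi₀⟩ := mem_iUnion.1 hx₀
  have hs : s.Nonempty := ⟨i₀, hmem i₀ x₀ hi₀⟩
  have hle (i : ι) (hi : i ∈ s) (x : E) : A i x ≤ f x := by
    obtain ⟨z, hz⟩ := (Finset.mem_filter.1 hi).2
    exact hconv.affine_le_of_eventuallyEq (eventuallyEq_of_mem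
      (mem_interior_iff_mem_nhds.1 hz) (hclosure i)) x
  refine ⟨s, hs, fun x => le_antisymm ?_ (Finset.sup'_le _ _ fun i hi => hle i hi x)⟩
  have hsub : ⋃ i, interior (closure (C i)) ⊆ {x | f x ≤ s.sup' hs fun i => A i x} := by
    refine iUnion_subset fun i x hx => ?_
    show f x ≤ _
    rw [hclosure i (interior_subset hx)]
    exact Finset.le_sup' (fun i => A i x) (hmem i x hx)
  have hclosed : IsClosed {x | f x ≤ s.sup' hs fun i => A i x} :=
    isClosed_le hcont (Continuous.finset_sup'_apply hs fun i _ =>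
      (A i).continuous_of_finiteDimensional)
  exact hclosed.closure_subset_iff.2 hsub (hdense.closure_eq ▸ mem_univ x)

end Normed

def IsPiecewiseIntAffine {n : ℕ} (f : (Fin n → ℝ) → ℝ) : Prop :=
  ∃ (ι : Type) (_ : Finite ι) (C : ι → Set (Fin n → ℝ)) (c : ι → ℝ) (α : ι → Fin n → ℤ),
    IsPiecewiseAffine f C fun i => intAffine (c i) (α i)

namespace IsPiecewiseIntAffine

variable {n : ℕ} {f g : (Fin n → ℝ) → ℝ}

theorem zero : IsPiecewiseIntAffine (0 : (Fin n → ℝ) → ℝ) :=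
  ⟨Unit, inferInstance, fun _ => univ, fun _ => 0, fun _ => 0,
    ⟨iUnion_const univ, fun _ => convex_univ, fun _ x _ => by simp⟩⟩

theorem add (hf : IsPiecewiseIntAffine f) (hg : IsPiecewiseIntAffine g) :
    IsPiecewiseIntAffine (f + g) := by
  obtain ⟨ι, _, C, c, α, hf⟩ := hf
  obtain ⟨κ, _, D, d, β, hg⟩ := hg
  refine ⟨ι × κ, inferInstance, fun k => C k.1 ∩ D k.2, fun k => c k.1 + d k.2,
    fun k => α k.1 + β k.2, ?_⟩
  simpa only [intAffine_add] using hf.add hg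

theorem sum {κ : Type*} (s : Finset κ) {f : κ → (Fin n → ℝ) → ℝ}
    (hf : ∀ i ∈ s, IsPiecewiseIntAffine (f i)) : IsPiecewiseIntAffine (∑ i ∈ s, f i) :=
  Finset.sum_induction f IsPiecewiseIntAffine (fun _ _ => add) zero hf

theorem sup_intAffine (c d : ℝ) (α β : Fin n → ℤ) :
    IsPiecewiseIntAffine (⇑(intAffine c α) ⊔ ⇑(intAffine d β)) := by
  refine ⟨Fin 2, inferInstance, ![{x | intAffine d β x ≤ intAffine c α x},
    {x | intAffine c α x ≤ intAffine d β x}], ![c, d], ![α, β], ?_⟩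
  convert isPiecewiseAffine_sup (intAffine c α) (intAffine d β) using 1
  ext i : 1
  fin_cases i <;> rfl

theorem isTropPoly (hf : IsPiecewiseIntAffine f) (hconv : ConvexOn ℝ univ f) : IsTropPoly f := by
  obtain ⟨ι, _, C, c, α, hf⟩ := hf
  obtain ⟨s, hs, hsup⟩ := hf.exists_eq_sup' hconv
  exact isTropPoly_of_eq_sup' s hs c α hsup

end IsPiecewiseIntAffine

section Real

theorem AffineMap.real_sub_apply (f : ℝ →ᵃ[ℝ] ℝ) (s t : ℝ) :
    f s - f t = (s - t) * f.linear 1 := by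
  rw [← vsub_eq_sub, ← f.linearMap_vsub, vsub_eq_sub, ← smul_eq_mul, ← map_smul, smul_eq_mul,
    mul_one]

theorem AffineMap.exists_real_apply_eq {x y : ℝ} (hxy : x ≠ y) (u v : ℝ) :
    ∃ ℓ : ℝ →ᵃ[ℝ] ℝ, ℓ x = u ∧ ℓ y = v := by
  set d := (v - u) / (y - x)
  refine ⟨AffineMap.lineMap (u - x * d) (u - x * d + d), ?_, ?_⟩ <;>
    simp only [AffineMap.lineMap_apply_ring']
  · ring
  · have : y - x ≠ 0 := sub_ne_zero.2 hxy.symm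
    simp only [d]
    field_simp
    ring

theorem le_max_of_forall_convexOn_Icc {g : ℝ → ℝ} (hg : Continuous g)
    (hloc : ∀ t, ∃ ε > 0, ConvexOn ℝ (Icc (t - ε) (t + ε)) g) {a b x : ℝ} (hx : x ∈ Icc a b) :
    g x ≤ max (g a) (g b) := by
  obtain ⟨z, hz, hmax⟩ := isCompact_Icc.exists_isMaxOn ⟨x, hx⟩ hg.continuousOn
  -- The largest maximiser `c` is an endpoint: otherwise convexity near `c` forces
  -- `g (c + δ) = g c`.
  set S := Icc a b ∩ {y | g y = g z}
  have hS : IsCompact S := isCompact_Icc.inter_right (isClosed_eq hg continuous_const)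
  obtain ⟨hcab, hcz : g (sSup S) = g z⟩ : sSup S ∈ S := hS.sSup_mem ⟨z, hz, rfl⟩
  set c := sSup S
  suffices c = a ∨ c = b by
    have hc : g x ≤ g c := hcz ▸ hmax hx
    rcases this with h | h
    · exact le_max_of_le_left (h ▸ hc)
    · exact le_max_of_le_right (h ▸ hc)
  by_contra! hne
  obtain ⟨ε, hε, hconv⟩ := hloc c
  set δ := min ε (min (c - a) (b - c))
  have hδ : 0 < δ := lt_min hε (lt_min (sub_pos.2 (lt_of_le_of_ne hcab.1 (Ne.symm hne.1)))
    (sub_pos.2 (lt_of_le_of_ne hcab.2 hne.2)))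
  have hδε : δ ≤ ε := min_le_left _ _
  have hδa : δ ≤ c - a := (min_le_right _ _).trans (min_le_left _ _)
  have hδb : δ ≤ b - c := (min_le_right _ _).trans (min_le_right _ _)
  have hmid := hconv.2 (x := c - δ) (y := c + δ) ⟨by linarith, by linarith⟩
    ⟨by linarith, by linarith⟩ (by norm_num : (0 : ℝ) ≤ 1 / 2) (by norm_num : (0 : ℝ) ≤ 1 / 2)
    (by norm_num)
  have hcmid : (1 / 2 : ℝ) • (c - δ) + (1 / 2 : ℝ) • (c + δ) = c := by
    simp only [smul_eq_mul]; ring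
  rw [hcmid, smul_eq_mul, smul_eq_mul] at hmid
  have hleft : g (c - δ) ≤ g z := hmax ⟨by linarith, by linarith⟩
  have hright : g (c + δ) ≤ g z := hmax ⟨by linarith, by linarith⟩
  have hmem : c + δ ∈ S := ⟨⟨by linarith, by linarith⟩, show g (c + δ) = g z by linarith⟩
  linarith [le_csSup hS.bddAbove hmem]

theorem convexOn_univ_of_forall_convexOn_Icc {f : ℝ → ℝ} (hf : Continuous f)
    (hloc : ∀ t, ∃ ε > 0, ConvexOn ℝ (Icc (t - ε) (t + ε)) f) : ConvexOn ℝ univ f := by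
  refine LinearOrder.convexOn_of_lt convex_univ fun x _ y _ hxy a b ha hb hab => ?_
  obtain ⟨ℓ, hℓx, hℓy⟩ := AffineMap.exists_real_apply_eq hxy.ne (f x) (f y)
  have hloc' (t : ℝ) : ∃ ε > 0, ConvexOn ℝ (Icc (t - ε) (t + ε)) (f - ⇑ℓ) := by
    obtain ⟨ε, hε, h⟩ := hloc t
    exact ⟨ε, hε, h.sub (ℓ.concaveOn_univ.subset (subset_univ _) (convex_Icc _ _))⟩
  have hmem : a • x + b • y ∈ Icc x y := by
    obtain rfl : a = 1 - b := by linarith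
    simp only [smul_eq_mul]
    constructor <;> nlinarith
  have h := le_max_of_forall_convexOn_Icc
    (hf.sub ℓ.continuous_of_finiteDimensional) hloc' hmem
  simp only [Pi.sub_apply, hℓx, hℓy, sub_self, max_self] at h
  rwa [sub_nonpos, Convex.combo_affine_apply hab, hℓx, hℓy] at h

theorem exists_Ioo_right_subset_of_iUnion_eq_univ {ι : Type*} [Finite ι] {D : ι → Set ℝ}
    (hD : ∀ i, Convex ℝ (D i)) (hcover : ⋃ i, D i = univ) (t : ℝ) :
    ∃ i, ∃ ε > 0, Ioo t (t + ε) ⊆ D i := by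
  have hfreq : ∃ᶠ s in 𝓝[>] t, ∃ i, s ∈ D i :=
    Frequently.of_forall fun s => mem_iUnion.1 (hcover ▸ mem_univ s)
  obtain ⟨i, hi⟩ := frequently_exists.1 hfreq
  obtain ⟨u, hu, htu⟩ := (hi.and_eventually self_mem_nhdsWithin).exists
  refine ⟨i, u - t, sub_pos.2 htu, fun s hs => ?_⟩
  obtain ⟨v, hv, hvs⟩ := (hi.and_eventually (Ioo_mem_nhdsGT hs.1)).exists
  exact (hD i).ordConnected.out hv hu ⟨hvs.2.le, by linarith [hs.2]⟩

theorem exists_Ioo_left_subset_of_iUnion_eq_univ {ι : Type*} [Finite ι] {D : ι → Set ℝ}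
    (hD : ∀ i, Convex ℝ (D i)) (hcover : ⋃ i, D i = univ) (t : ℝ) :
    ∃ i, ∃ ε > 0, Ioo (t - ε) t ⊆ D i := by
  obtain ⟨i, ε, hε, hsub⟩ := exists_Ioo_right_subset_of_iUnion_eq_univ (D := fun i => -D i)
    (fun i => (hD i).neg) (by rw [← iUnion_neg, hcover, neg_univ]) (-t)
  refine ⟨i, ε, hε, fun s hs => ?_⟩
  simpa using hsub (show -s ∈ Ioo (-t) (-t + ε) from ⟨by linarith [hs.2], by linarith [hs.1]⟩)

theorem convexOn_Icc_add_sup_of_eqOn {φ : ℝ → ℝ} {ℓ₁ ℓ₂ : ℝ →ᵃ[ℝ] ℝ} {t ε : ℝ} (hε : 0 ≤ ε)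
    (h₁ : EqOn φ ℓ₁ (Icc (t - ε) t)) (h₂ : EqOn φ ℓ₂ (Icc t (t + ε))) :
    ConvexOn ℝ (Icc (t - ε) (t + ε)) (φ + (⇑ℓ₁ ⊔ ⇑ℓ₂)) := by
  -- With slopes `m₁, m₂`, `φ + max ℓ₁ ℓ₂ = ℓ₁ + ℓ₂ + (m₂ - m₁)⁺ |s - t|`; at a concave corner
  -- `φ = min ℓ₁ ℓ₂` and the last term vanishes.
  have hconv : ConvexOn ℝ univ
      (⇑ℓ₁ + ⇑ℓ₂ + fun s => max 0 (ℓ₂.linear 1 - ℓ₁.linear 1) • dist s t) :=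
    (ℓ₁.convexOn_univ.add ℓ₂.convexOn_univ).add ((convexOn_univ_dist t).smul (le_max_left _ _))
  refine (hconv.subset (subset_univ _) (convex_Icc _ _)).congr fun s hs => ?_
  have ht : ℓ₁ t = ℓ₂ t := (h₁ ⟨by linarith, le_rfl⟩).symm.trans (h₂ ⟨le_rfl, by linarith⟩)
  have e₁ := ℓ₁.real_sub_apply s t
  have e₂ := ℓ₂.real_sub_apply s t
  simp only [Pi.add_apply, Pi.sup_apply, Real.dist_eq, smul_eq_mul]
  rcases le_total s t with hst | hst
  · rw [h₁ ⟨hs.1, hst⟩, abs_of_nonpos (sub_nonpos.2 hst)]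
    rcases le_total (ℓ₁.linear 1) (ℓ₂.linear 1) with hm | hm
    · rw [max_eq_right (sub_nonneg.2 hm), max_eq_left (by nlinarith)]
      linarith
    · rw [max_eq_left (sub_nonpos.2 hm), max_eq_right (by nlinarith)]
      linarith
  · rw [h₂ ⟨hst, hs.2⟩, abs_of_nonneg (sub_nonneg.2 hst)]
    rcases le_total (ℓ₁.linear 1) (ℓ₂.linear 1) with hm | hm
    · rw [max_eq_right (sub_nonneg.2 hm), max_eq_right (by nlinarith)]
      linarith
    · rw [max_eq_left (sub_nonpos.2 hm), max_eq_left (by nlinarith)]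
      linarith

end Real

theorem IsPiecewiseAffine.convexOn_add_sum_sup_real {ι : Type*} [Fintype ι] {φ : ℝ → ℝ}
    {D : ι → Set ℝ} {ℓ : ι → ℝ →ᵃ[ℝ] ℝ} (hφ : IsPiecewiseAffine φ D ℓ) (hcont : Continuous φ) :
    ConvexOn ℝ univ (φ + ∑ p : ι × ι, (⇑(ℓ p.1) ⊔ ⇑(ℓ p.2))) := by
  classical
  have hℓ (i : ι) : Continuous (ℓ i) := (ℓ i).continuous_of_finiteDimensional
  have hsum : Continuous (∑ p : ι × ι, (⇑(ℓ p.1) ⊔ ⇑(ℓ p.2))) := by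
    rw [Finset.sum_fn]
    exact continuous_finsetSum _ fun p _ => (hℓ p.1).sup (hℓ p.2)
  refine convexOn_univ_of_forall_convexOn_Icc (hcont.add hsum) fun t => ?_
  obtain ⟨i, ε₁, hε₁, hi⟩ := exists_Ioo_left_subset_of_iUnion_eq_univ hφ.convex hφ.iUnion_eq t
  obtain ⟨j, ε₂, hε₂, hj⟩ := exists_Ioo_right_subset_of_iUnion_eq_univ hφ.convex hφ.iUnion_eq t
  have hleft : EqOn φ (ℓ i) (Icc (t - ε₁) t) :=
    closure_Ioo (by linarith : t - ε₁ ≠ t) ▸ ((hφ.eqOn i).mono hi).closure hcont (hℓ i)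
  have hright : EqOn φ (ℓ j) (Icc t (t + ε₂)) :=
    closure_Ioo (by linarith : t ≠ t + ε₂) ▸ ((hφ.eqOn j).mono hj).closure hcont (hℓ j)
  have hmin₁ : min ε₁ ε₂ ≤ ε₁ := min_le_left _ _
  have hmin₂ : min ε₁ ε₂ ≤ ε₂ := min_le_right _ _
  refine ⟨min ε₁ ε₂, lt_min hε₁ hε₂, ?_⟩
  rw [← Finset.add_sum_erase _ _ (Finset.mem_univ (i, j)), ← add_assoc]
  refine (convexOn_Icc_add_sup_of_eqOn (by positivity)
    (hleft.mono (Icc_subset_Icc (by linarith) le_rfl))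
    (hright.mono (Icc_subset_Icc le_rfl (by linarith)))).add ?_
  exact (convexOn_finset_sum convex_univ fun p _ =>
    (ℓ p.1).convexOn_univ.sup (ℓ p.2).convexOn_univ).subset (subset_univ _) (convex_Icc _ _)

theorem convexOn_univ_of_forall_lineMap {E : Type*} [AddCommGroup E] [Module ℝ E] {f : E → ℝ}
    (hf : ∀ x y : E, ConvexOn ℝ univ (f ∘ (AffineMap.lineMap x y : ℝ →ᵃ[ℝ] E))) :
    ConvexOn ℝ univ f := by
  refine ⟨convex_univ, fun x _ y _ a b ha hb hab => ?_⟩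
  have h := (hf x y).2 (mem_univ 0) (mem_univ 1) ha hb hab
  obtain rfl : a = 1 - b := by linarith
  simpa [AffineMap.lineMap_apply_module] using h

theorem IsPiecewiseAffine.convexOn_add_sum_sup {E ι : Type*} [NormedAddCommGroup E]
    [NormedSpace ℝ E] [Fintype ι] {f : E → ℝ} {C : ι → Set E} {A : ι → E →ᵃ[ℝ] ℝ}
    (hf : IsPiecewiseAffine f C A) (hcont : Continuous f) :
    ConvexOn ℝ univ (f + ∑ p : ι × ι, (⇑(A p.1) ⊔ ⇑(A p.2))) := by
  refine convexOn_univ_of_forall_lineMap fun x y => ?_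
  convert (hf.comp_affineMap (AffineMap.lineMap x y)).convexOn_add_sum_sup_real
    (hcont.comp AffineMap.lineMap_continuous) using 1
  ext s
  simp [Finset.sum_apply]

/-- If `h : ℝⁿ → ℝ` is piecewise-affine with finitely many pieces,
each piece a convex cell on which `h` is affine with integer linear part, and
the pieces cover `ℝⁿ`, then there exists a convex function `g`, a finite max of
integer-affine functions, with `h + g` convex; hence `h` is a difference of two
tropical polynomial functions. -/
theorem piecewise_integer_affine_is_difference_of_tropical_polys {n : ℕ}
    (h : (Fin n → ℝ) → ℝ) (hcont : Continuous h)
    (ι : Type) (_ : Finite ι) (C : ι → Set (Fin n → ℝ))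
    (α : ι → Fin n → ℤ) (c : ι → ℝ)
    (hcover : (⋃ k, C k) = Set.univ) (hconv : ∀ k, Convex ℝ (C k))
    (haff : ∀ k, ∀ x ∈ C k, h x = c k + ∑ i, (α k i : ℝ) * x i) :
    ∃ g : (Fin n → ℝ) → ℝ, IsTropPoly g ∧
      ConvexOn ℝ Set.univ (fun x => h x + g x) ∧
      ∃ p q : (Fin n → ℝ) → ℝ, IsTropPoly p ∧ IsTropPoly q ∧ h = p - q := by
  have := Fintype.ofFinite ι
  let A (k : ι) := intAffine (c k) (α k)
  let g := ∑ p : ι × ι, (⇑(A p.1) ⊔ ⇑(A p.2))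
  have hh : IsPiecewiseAffine h C A := ⟨hcover, hconv, haff⟩
  have hg : IsPiecewiseIntAffine g :=
    IsPiecewiseIntAffine.sum _ fun p _ => .sup_intAffine _ _ _ _
  have hg_conv : ConvexOn ℝ univ g := convexOn_finset_sum convex_univ fun p _ =>
    (A p.1).convexOn_univ.sup (A p.2).convexOn_univ
  have hhg_conv : ConvexOn ℝ univ (h + g) := hh.convexOn_add_sum_sup hcont
  have hhg : IsPiecewiseIntAffine (h + g) := IsPiecewiseIntAffine.add ⟨ι, ‹_›, C, c, α, hh⟩ hg
  exact ⟨g, hg.isTropPoly hg_conv, hhg_conv, h + g, g, hhg.isTropPoly hhg_conv,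
    hg.isTropPoly hg_conv, (add_sub_cancel_right h g).symm⟩
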